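/- arXiv:math/0512019 — 2 statements merged into one kernel-verified Lean document; each statement's English description precedes it below -/
import Mathlib

section
/- Let F be a finite family of nonempty sets such that for any two distinct A, B ∈ F there is at most one set in F disjoint from both A and B. Then cd_2(F) ≤ 3. -/
open Finset

/-- The general Kneser graph of a finite set system: vertices are the members
of the family, two sets adjacent iff they are disjoint (and distinct). -/
def kneserGraph {α : Type*} [DecidableEq α] (𝓕 : Finset (Finset α)) :
    SimpleGraph {F // F ∈ 𝓕} where
  Adj A B := A ≠ B ∧ Disjoint (A : Finset α) (B : Finset α)
  symm := by
    refine ⟨?_⟩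
    intro A B hAB
    exact ⟨hAB.1.symm, hAB.2.symm⟩
  loopless := ⟨fun A hA => hA.1 rfl⟩

/-- The 2-colorability defect of a finite set system: the minimum number of
points to delete so that the sets avoiding the deleted points can be 2-colored
with no set monochromatic. -/
noncomputable def cdTwo {α : Type*} [DecidableEq α] (𝓕 : Finset (Finset α)) : ℕ :=
  sInf {k | ∃ Y : Finset α, Y.card = k ∧ ∃ c : α → Fin 2,
    ∀ F ∈ 𝓕, Disjoint F Y → (∃ a ∈ F, c a = 0) ∧ (∃ b ∈ F, c b = 1)}

/-!
Take `A ∈ 𝓕` of minimum size. If every member of `𝓕` meets `A`, delete one point of `A` and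
colour `A` red, everything else blue. Otherwise take `B` of minimum size among the members
disjoint from `A`. Outside `A ∪ B`, every set `X ≠ A` avoiding `B` meets every set `W ≠ B`
avoiding `A`: a disjoint pair `X, W` would give two sets `B ≠ W` both disjoint from `A` and
`X`. For such cross-intersecting families, a maximal set `T` containing the trace of no `W`
meets the trace of every `X`, except that the `X` missing `T` all pass through a single
extra point `t`. Colouring `B ∪ T` blue and the rest red, and deleting a point of `A`, a
point of `B` and `t`, leaves no monochromatic set.
-/

section

variable {α : Type*} [DecidableEq α]

lemma cdTwo_le_card {𝓕 : Finset (Finset α)} (Y : Finset α) (c : α → Fin 2)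
    (hc : ∀ F ∈ 𝓕, Disjoint F Y → (∃ a ∈ F, c a = 0) ∧ (∃ b ∈ F, c b = 1)) :
    cdTwo 𝓕 ≤ Y.card :=
  Nat.sInf_le ⟨Y, rfl, c, hc⟩

lemma exists_hitting_set_avoiding_traces (U : Finset α) (P Q : Finset (Finset α))
    (hP : ∀ p ∈ P, (p ∩ U).Nonempty) (hQ : ∀ q ∈ Q, (q ∩ U).Nonempty)
    (hPQ : ∀ p ∈ P, ∀ q ∈ Q, (p ∩ q ∩ U).Nonempty) :
    ∃ T ⊆ U, ∃ s : Finset α, s.card ≤ 1 ∧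
      (∀ q ∈ Q, ¬ q ∩ U ⊆ T) ∧ ∀ p ∈ P, ¬ Disjoint p (s ∪ T) := by
  set free := U.powerset.filter fun T => ∀ q ∈ Q, ¬ q ∩ U ⊆ T
  have empty_mem : ∅ ∈ free := by
    simp only [free, mem_filter, empty_mem_powerset, true_and, subset_empty]
    exact fun q hq => (hQ q hq).ne_empty
  obtain ⟨T, hT, hTmax⟩ := free.exists_max_image card ⟨∅, empty_mem⟩
  obtain ⟨hTU, hTfree⟩ : T ⊆ U ∧ ∀ q ∈ Q, ¬ q ∩ U ⊆ T := by
    simpa only [free, mem_filter, mem_powerset] using hT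
  by_cases hall : ∀ p ∈ P, ¬ Disjoint p T
  · exact ⟨T, hTU, ∅, by simp, hTfree, by simpa using hall⟩
  push Not at hall
  obtain ⟨p₀, hp₀, hp₀T⟩ := hall
  obtain ⟨t, ht⟩ := hP p₀ hp₀
  obtain ⟨htp₀, htU⟩ := mem_inter.mp ht
  have htT : t ∉ T := disjoint_left.mp hp₀T htp₀
  obtain ⟨q₀, hq₀, hq₀T⟩ : ∃ q ∈ Q, q ∩ U ⊆ insert t T := by
    by_contra! hfree
    have hmem : insert t T ∈ free := by
      simpa only [free, mem_filter, mem_powerset] using ⟨insert_subset htU hTU, hfree⟩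
    have := hTmax _ hmem
    rw [card_insert_of_notMem htT] at this
    omega
  refine ⟨T, hTU, {t}, by simp, hTfree, fun p hp => ?_⟩
  obtain ⟨x, hx⟩ := hPQ p hp q₀ hq₀
  obtain ⟨⟨hxp, hxq₀⟩, hxU⟩ := by simpa only [mem_inter] using hx
  have hxtT : x ∈ {t} ∪ T := by simpa using hq₀T (mem_inter.mpr ⟨hxq₀, hxU⟩)
  exact not_disjoint_iff.mpr ⟨x, hxp, hxtT⟩

lemma cdTwo_le_one_of_forall_not_disjoint {𝓕 : Finset (Finset α)} {A : Finset α}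
    (hAne : A.Nonempty) (hAmin : ∀ F ∈ 𝓕, F ⊆ A → F = A)
    (hmeet : ∀ F ∈ 𝓕, ¬ Disjoint F A) : cdTwo 𝓕 ≤ 1 := by
  obtain ⟨a₀, ha₀⟩ := hAne
  refine (cdTwo_le_card {a₀} (fun x => if x ∈ A then 0 else 1) fun F hF hFa₀ => ?_).trans
    (card_singleton a₀).le
  have hFA : F ≠ A := fun e => disjoint_right.mp hFa₀ (mem_singleton_self a₀) (e ▸ ha₀)
  obtain ⟨x, hxF, hxA⟩ := not_disjoint_iff.mp (hmeet F hF)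
  obtain ⟨y, hyF, hyA⟩ := not_subset.mp fun hsub => hFA (hAmin F hF hsub)
  exact ⟨⟨x, hxF, if_pos hxA⟩, ⟨y, hyF, if_neg hyA⟩⟩

lemma cdTwo_le_card_add_two {𝓕 : Finset (Finset α)} {A B T s : Finset α} {a₀ b₀ : α}
    (ha₀ : a₀ ∈ A) (hb₀ : b₀ ∈ B) (hAB : Disjoint A B) (hAT : Disjoint A T)
    (hred : ∀ F ∈ 𝓕, F ≠ B → Disjoint F A → ∃ x ∈ F, x ∉ B ∪ T)
    (hblue : ∀ F ∈ 𝓕, F ≠ A → Disjoint F B → ¬ Disjoint F (s ∪ T)) :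
    cdTwo 𝓕 ≤ s.card + 2 := by
  refine (cdTwo_le_card (insert a₀ (insert b₀ s)) (fun x => if x ∈ B ∪ T then 1 else 0)
    fun F hF hFY => ?_).trans ((card_insert_le _ _).trans (by grind [card_insert_le]))
  have ha₀F : a₀ ∉ F := disjoint_right.mp hFY (by simp)
  have hb₀F : b₀ ∉ F := disjoint_right.mp hFY (by simp)
  have hFs : Disjoint F s := hFY.mono_right fun x hx => by simp [hx]
  constructor
  · by_cases hFA : Disjoint F A
    · obtain ⟨x, hxF, hx⟩ := hred F hF (fun e => hb₀F (e ▸ hb₀)) hFA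
      exact ⟨x, hxF, if_neg hx⟩
    · obtain ⟨x, hxF, hxA⟩ := not_disjoint_iff.mp hFA
      have hx : x ∉ B ∪ T := by
        simp [disjoint_left.mp hAB hxA, disjoint_left.mp hAT hxA]
      exact ⟨x, hxF, if_neg hx⟩
  · by_cases hFB : Disjoint F B
    · obtain ⟨x, hxF, hxsT⟩ := not_disjoint_iff.mp (hblue F hF (fun e => ha₀F (e ▸ ha₀)) hFB)
      have hxT : x ∈ T := (mem_union.mp hxsT).resolve_left (disjoint_left.mp hFs hxF)
      exact ⟨x, hxF, if_pos (mem_union_right B hxT)⟩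
    · obtain ⟨x, hxF, hxB⟩ := not_disjoint_iff.mp hFB
      exact ⟨x, hxF, if_pos (mem_union_left T hxB)⟩

lemma cdTwo_le_three_of_cross_intersecting {𝓕 : Finset (Finset α)} {A B : Finset α}
    (hAne : A.Nonempty) (hBne : B.Nonempty) (hAB : Disjoint A B)
    (hAmin : ∀ F ∈ 𝓕, F ⊆ A → F = A) (hBmin : ∀ F ∈ 𝓕, Disjoint F A → F ⊆ B → F = B)
    (hcross : ∀ X ∈ 𝓕, X ≠ A → Disjoint X B → ∀ W ∈ 𝓕, W ≠ B → Disjoint W A →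
      ¬ Disjoint X W) :
    cdTwo 𝓕 ≤ 3 := by
  set U := 𝓕.biUnion id \ (A ∪ B)
  have mem_U : ∀ X ∈ 𝓕, ∀ x ∈ X, x ∉ A → x ∉ B → x ∈ U := fun X hX x hx hxA hxB =>
    mem_sdiff.mpr ⟨mem_biUnion.mpr ⟨X, hX, hx⟩, by simp [hxA, hxB]⟩
  set P := 𝓕.filter fun X => X ≠ A ∧ Disjoint X B
  set Q := 𝓕.filter fun W => W ≠ B ∧ Disjoint W A
  have hP : ∀ X ∈ P, (X ∩ U).Nonempty := by
    simp only [P, mem_filter, and_imp]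
    intro X hX hXA hXB
    obtain ⟨x, hx, hxA⟩ := not_subset.mp fun hsub => hXA (hAmin X hX hsub)
    exact ⟨x, mem_inter.mpr ⟨hx, mem_U X hX x hx hxA (disjoint_left.mp hXB hx)⟩⟩
  have hQ : ∀ W ∈ Q, (W ∩ U).Nonempty := by
    simp only [Q, mem_filter, and_imp]
    intro W hW hWB hWA
    obtain ⟨x, hx, hxB⟩ := not_subset.mp fun hsub => hWB (hBmin W hW hWA hsub)
    exact ⟨x, mem_inter.mpr ⟨hx, mem_U W hW x hx (disjoint_left.mp hWA hx) hxB⟩⟩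
  have hPQ : ∀ X ∈ P, ∀ W ∈ Q, (X ∩ W ∩ U).Nonempty := by
    simp only [P, Q, mem_filter, and_imp]
    intro X hX hXA hXB W hW hWB hWA
    obtain ⟨x, hxX, hxW⟩ := not_disjoint_iff.mp (hcross X hX hXA hXB W hW hWB hWA)
    exact ⟨x, by simp [hxX, hxW, mem_U X hX x hxX (disjoint_left.mp hWA hxW)
      (disjoint_left.mp hXB hxX)]⟩
  obtain ⟨T, hTU, s, hs, hQT, hPT⟩ := exists_hitting_set_avoiding_traces U P Q hP hQ hPQ
  have hAT : Disjoint A T := disjoint_left.mpr fun x hxA hxT => by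
    simpa [hxA] using (mem_sdiff.mp (hTU hxT)).2
  have hred : ∀ F ∈ 𝓕, F ≠ B → Disjoint F A → ∃ x ∈ F, x ∉ B ∪ T := by
    intro F hF hFB hFA
    obtain ⟨x, hxFU, hxT⟩ := not_subset.mp (hQT F (by simp [Q, hF, hFB, hFA]))
    obtain ⟨hxF, hxU⟩ := mem_inter.mp hxFU
    have hxB : x ∉ B := fun h => (mem_sdiff.mp hxU).2 (mem_union_right A h)
    exact ⟨x, hxF, by simp [hxB, hxT]⟩
  have hblue : ∀ F ∈ 𝓕, F ≠ A → Disjoint F B → ¬ Disjoint F (s ∪ T) :=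
    fun F hF hFA hFB => hPT F (by simp [P, hF, hFA, hFB])
  obtain ⟨a₀, ha₀⟩ := hAne
  obtain ⟨b₀, hb₀⟩ := hBne
  exact (cdTwo_le_card_add_two ha₀ hb₀ hAB hAT hred hblue).trans (by omega)

end

theorem stmt7 {α : Type*} [DecidableEq α] (𝓕 : Finset (Finset α))
    (hne : ∀ F ∈ 𝓕, F.Nonempty)
    (h : ∀ A ∈ 𝓕, ∀ B ∈ 𝓕, A ≠ B →
      ∀ C ∈ 𝓕, ∀ D ∈ 𝓕,
        Disjoint C A → Disjoint C B → Disjoint D A → Disjoint D B → C = D) :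
    cdTwo 𝓕 ≤ 3 := by
  rcases 𝓕.eq_empty_or_nonempty with rfl | h𝓕
  · exact (cdTwo_le_card ∅ (fun _ => 0) (by simp)).trans (by simp)
  obtain ⟨A, hA, hAsmall⟩ := 𝓕.exists_min_image card h𝓕
  have hAmin : ∀ F ∈ 𝓕, F ⊆ A → F = A := fun F hF hsub =>
    eq_of_subset_of_card_le hsub (hAsmall F hF)
  by_cases hdisj : ∃ B ∈ 𝓕, Disjoint B A
  · obtain ⟨B₀, hB₀, hB₀A⟩ := hdisj
    obtain ⟨B, hB, hBsmall⟩ :=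
      (𝓕.filter (Disjoint · A)).exists_min_image card ⟨B₀, mem_filter.mpr ⟨hB₀, hB₀A⟩⟩
    obtain ⟨hB, hBA⟩ := mem_filter.mp hB
    refine cdTwo_le_three_of_cross_intersecting (hne A hA) (hne B hB) hBA.symm hAmin
      (fun F hF hFA hsub => eq_of_subset_of_card_le hsub (hBsmall F (mem_filter.mpr ⟨hF, hFA⟩)))
      fun X hX hXA hXB W hW hWB hWA hXW => hWB ?_
    exact (h A hA X hX hXA.symm B hB W hW hBA hXB.symm hWA hXW.symm).symm
  · push Not at hdisj
    exact (cdTwo_le_one_of_forall_not_disjoint (hne A hA) hAmin hdisj).trans (by norm_num)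
end

section
/- If F is a finite family of nonempty sets whose general Kneser graph KG(F) contains no K_{2,2} subgraph (i.e., there do not exist distinct A, B ∈ F and distinct C, D ∈ F with A, B each disjoint from both C and D), then cd_2(F) ≤ 3. -/
open Finset

/-!
If the family is intersecting, delete a point of an inclusion-minimal member `A` and color `A`
against its complement. Otherwise let `A` be inclusion-minimal and `B` inclusion-minimal among the
members disjoint from `A`, and delete a point of each. If `A` is the only member disjoint from `B`,
color `B` against its complement. Otherwise let `T = F₀ \ (A ∪ B)` be inclusion-minimal among the
members `F₀ ≠ A` disjoint from `B`, delete a point `p ∈ T` as well, and color `A ∪ T` against its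
complement: a surviving member missing `A ∪ T` would span a `K_{2,2}` with `A`, `F₀` and `B`, and
one inside `A ∪ T` would have trace `T` on the complement of `A ∪ B`, hence contain `p`.
-/

section

variable {α : Type*} [DecidableEq α] {𝓕 : Finset (Finset α)}

theorem cdTwo_le_card_of_split (Y S : Finset α)
    (hS : ∀ F ∈ 𝓕, Disjoint F Y → ¬Disjoint F S ∧ ¬F ⊆ S) : cdTwo 𝓕 ≤ #Y := by
  refine Nat.sInf_le ⟨Y, rfl, fun x => if x ∈ S then 0 else 1, fun F hF hFY => ?_⟩
  obtain ⟨hmeet, hout⟩ := hS F hF hFY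
  obtain ⟨a, haF, haS⟩ := not_disjoint_iff.mp hmeet
  obtain ⟨b, hbF, hbS⟩ := not_subset.mp hout
  exact ⟨⟨a, haF, if_pos haS⟩, ⟨b, hbF, if_neg hbS⟩⟩

theorem cdTwo_le_one_of_intersecting (hI : (𝓕 : Set (Finset α)).Intersecting) :
    cdTwo 𝓕 ≤ 1 := by
  obtain h𝓕 | ⟨F, hF⟩ := 𝓕.eq_empty_or_nonempty
  · subst h𝓕
    exact (cdTwo_le_card_of_split ∅ ∅ (by simp)).trans zero_le_one
  obtain ⟨A, -, hA⟩ := exists_minimal_le_of_wellFoundedLT (· ∈ 𝓕) F hF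
  obtain ⟨p, hp⟩ := nonempty_iff_ne_empty.mpr (hI.ne_bot hA.prop)
  refine (cdTwo_le_card_of_split {p} A fun G hG hGp => ⟨hI hG hA.prop, fun hGA => ?_⟩).trans
    (card_singleton p).le
  exact disjoint_singleton_right.mp hGp (hA.eq_of_le hG hGA ▸ hp)

theorem exists_minimal_disjoint_pair (hI : ¬(𝓕 : Set (Finset α)).Intersecting) :
    ∃ A B, Minimal (· ∈ 𝓕) A ∧ Minimal (fun F => F ∈ 𝓕 ∧ Disjoint F A) B := by
  simp only [Set.Intersecting, mem_coe, not_forall, not_not] at hI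
  obtain ⟨X, hX, Z, hZ, hXZ⟩ := hI
  obtain ⟨A, hAX, hA⟩ := exists_minimal_le_of_wellFoundedLT (· ∈ 𝓕) X hX
  obtain ⟨B, hB⟩ := exists_minimal_of_wellFoundedLT (fun F => F ∈ 𝓕 ∧ Disjoint F A)
    ⟨Z, hZ, (hXZ.mono_left hAX).symm⟩
  exact ⟨A, B, hA, hB⟩

theorem cdTwo_le_two_of_unique_disjoint {A B : Finset α} (hA : A.Nonempty) (hB : B.Nonempty)
    (hBmin : Minimal (fun F => F ∈ 𝓕 ∧ Disjoint F A) B)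
    (huniq : ∀ F ∈ 𝓕, Disjoint F B → F = A) : cdTwo 𝓕 ≤ 2 := by
  obtain ⟨a, ha⟩ := hA
  obtain ⟨b, hb⟩ := hB
  refine (cdTwo_le_card_of_split {a, b} B fun F hF hFY => ⟨fun hFB => ?_, fun hFB => ?_⟩).trans
    card_le_two
  · exact disjoint_left.mp hFY (huniq F hF hFB ▸ ha) (by simp)
  · have hFA : Disjoint F A := hBmin.prop.2.mono_left hFB
    exact disjoint_left.mp hFY (hBmin.eq_of_le ⟨hF, hFA⟩ hFB ▸ hb) (by simp)

theorem subset_union_sdiff_union_of_disjoint {F B : Finset α} (A : Finset α)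
    (h : Disjoint F B) : F ⊆ A ∪ F \ (A ∪ B) := fun x hx => by
  by_cases hxA : x ∈ A <;> simp [hx, hxA, disjoint_left.mp h hx]

theorem cdTwo_le_three_of_exists_disjoint_ne {A B : Finset α}
    (hK : ∀ A ∈ 𝓕, ∀ B ∈ 𝓕, ∀ C ∈ 𝓕, ∀ D ∈ 𝓕,
      A ≠ B → C ≠ D → Disjoint A C → Disjoint A D → Disjoint B C → Disjoint B D → False)
    (hA : Minimal (· ∈ 𝓕) A) (hAne : A.Nonempty)
    (hB : Minimal (fun F => F ∈ 𝓕 ∧ Disjoint F A) B) (hBne : B.Nonempty)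
    (hex : ∃ F ∈ 𝓕, F ≠ A ∧ Disjoint F B) : cdTwo 𝓕 ≤ 3 := by
  set 𝓖 := 𝓕.filter fun F => F ≠ A ∧ Disjoint F B
  obtain ⟨T, hT⟩ := (𝓖.image (· \ (A ∪ B))).exists_minimal <| by
    obtain ⟨F, hF, hFA, hFB⟩ := hex
    exact ⟨_, mem_image_of_mem _ (mem_filter.mpr ⟨hF, hFA, hFB⟩)⟩
  obtain ⟨F₀, hF₀𝓖, rfl⟩ := mem_image.mp hT.prop
  obtain ⟨hF₀, hF₀A, hF₀B⟩ := mem_filter.mp hF₀𝓖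
  have hTB : Disjoint (F₀ \ (A ∪ B)) B := disjoint_sdiff_self_left.mono_right subset_union_right
  have hF₀S := subset_union_sdiff_union_of_disjoint A hF₀B
  -- otherwise `F₀ ⊆ A`, against the minimality of `A`
  obtain ⟨p, hp⟩ : (F₀ \ (A ∪ B)).Nonempty := by
    refine nonempty_iff_ne_empty.mpr fun hT₀ => hF₀A (hA.eq_of_le hF₀ fun x hx => ?_)
    simpa [hT₀] using hF₀S hx
  obtain ⟨a, ha⟩ := hAne
  obtain ⟨b, hb⟩ := hBne
  refine (cdTwo_le_card_of_split {a, b, p} (A ∪ F₀ \ (A ∪ B))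
    fun F hF hFY => ⟨fun hFS => ?_, fun hFS => ?_⟩).trans card_le_three
  · have hFB : F ≠ B := fun hFB => disjoint_left.mp hFY (hFB ▸ hb) (by simp)
    exact hK A hA.prop F₀ hF₀ B hB.prop.1 F hF (Ne.symm hF₀A) (Ne.symm hFB) hB.prop.2.symm
      (disjoint_union_right.mp hFS).1.symm hF₀B (hFS.mono_right hF₀S).symm
  · have hFA : F ≠ A := fun hFA => disjoint_left.mp hFY (hFA ▸ ha) (by simp)
    have hFB : Disjoint F B :=
      (disjoint_union_left.mpr ⟨hB.prop.2.symm, hTB⟩).mono_left hFS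
    have htrace : F \ (A ∪ B) ⊆ F₀ \ (A ∪ B) := fun x hx =>
      (mem_union.mp (hFS (mem_sdiff.mp hx).1)).resolve_left
        fun hxA => (mem_sdiff.mp hx).2 (mem_union_left _ hxA)
    have heq := hT.eq_of_le (mem_image_of_mem _ (mem_filter.mpr ⟨hF, hFA, hFB⟩)) htrace
    exact disjoint_left.mp hFY (mem_sdiff.mp (heq ▸ hp)).1 (by simp)

end

theorem stmt8 {α : Type*} [DecidableEq α] (𝓕 : Finset (Finset α))
    (hne : ∀ F ∈ 𝓕, F.Nonempty)
    (h : ∀ A ∈ 𝓕, ∀ B ∈ 𝓕, ∀ C ∈ 𝓕, ∀ D ∈ 𝓕,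
      A ≠ B → C ≠ D → Disjoint A C → Disjoint A D → Disjoint B C →
        Disjoint B D → False) :
    cdTwo 𝓕 ≤ 3 := by
  by_cases hI : (𝓕 : Set (Finset α)).Intersecting
  · exact (cdTwo_le_one_of_intersecting hI).trans (by norm_num)
  obtain ⟨A, B, hA, hB⟩ := exists_minimal_disjoint_pair hI
  by_cases hex : ∃ F ∈ 𝓕, F ≠ A ∧ Disjoint F B
  · exact cdTwo_le_three_of_exists_disjoint_ne h hA (hne A hA.prop) hB (hne B hB.prop.1) hex
  · refine (cdTwo_le_two_of_unique_disjoint (hne A hA.prop) (hne B hB.prop.1) hB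
      fun F hF hFB => of_not_not fun hFA => hex ⟨F, hF, hFA, hFB⟩).trans (by norm_num)
end
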